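/- arXiv:1511.02775 — 7 statements merged into one kernel-verified Lean document; each statement's English description precedes it below -/
import Mathlib

section
/- Let F be a continuous cdf with right tail index α_+(F) ∈ (0, +∞). Then E_F[X_+^{α_+(F) - δ}] < +∞ for every 0 < δ ≤ α_+(F), and E_F[X_+^{α_+(F) + δ}] = +∞ for every δ > 0. -/
/-!
For large `x` the tail index squeezes `P(X > x)` between `x ^ (-(α + ε))` and `x ^ (-(α - ε))`.
By the layer-cake formula `E[X₊ ^ p] = p ∫₀^∞ t ^ (p - 1) P(X > t) dt`, the upper bound makes
the moment finite for `p < α`; by Markov's inequality `E[X₊ ^ p] ≥ t ^ p P(X > t) ≥ t ^ (p - α - ε)`,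
which is unbounded for `p > α`.
-/

open MeasureTheory Filter Set
open scoped ENNReal Topology

section TailIndex

variable {g : ℝ → ℝ} {α : ℝ}

lemma eventually_le_rpow_neg_of_tendsto_neg_log_div_log
    (hg : Tendsto (fun x => -Real.log (g x) / Real.log x) atTop (𝓝 α)) {β : ℝ} (hβ : β < α) :
    ∀ᶠ x in atTop, g x ≤ x ^ (-β) := by
  filter_upwards [hg.eventually (eventually_gt_nhds hβ), eventually_gt_atTop 1] with x hx hx1
  have hlog : 0 < Real.log x := Real.log_pos hx1
  rcases le_or_gt (g x) 0 with hgx | hgx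
  · exact hgx.trans (by positivity)
  · rw [lt_div_iff₀ hlog] at hx
    rw [Real.le_rpow_iff_log_le hgx (by linarith)]
    linarith

lemma eventually_rpow_neg_le_of_tendsto_neg_log_div_log (hg_nonneg : ∀ x, 0 ≤ g x) (hα : 0 < α)
    (hg : Tendsto (fun x => -Real.log (g x) / Real.log x) atTop (𝓝 α)) {γ : ℝ} (hγ : α < γ) :
    ∀ᶠ x in atTop, x ^ (-γ) ≤ g x := by
  filter_upwards [hg.eventually (Ioo_mem_nhds hα hγ), eventually_gt_atTop 1]
    with x ⟨hx_pos, hx_lt⟩ hx1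
  have hlog : 0 < Real.log x := Real.log_pos hx1
  -- `Real.log 0 = 0`, so a vanishing tail would make the ratio vanish too.
  have hgx : 0 < g x := (hg_nonneg x).lt_of_ne' fun h => by simp [h] at hx_pos
  rw [div_lt_iff₀ hlog] at hx_lt
  rw [Real.rpow_le_iff_le_log (by linarith) hgx]
  linarith

end TailIndex

lemma one_sub_cdf_eq_measureReal_Ioi {μ : Measure ℝ} [IsProbabilityMeasure μ] {F : ℝ → ℝ}
    (hF : ∀ x, F x = (μ (Iic x)).toReal) (x : ℝ) : 1 - F x = μ.real (Ioi x) := by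
  rw [hF, ← compl_Iic, measureReal_compl measurableSet_Iic, probReal_univ, measureReal_def]

section Moments

variable {μ : Measure ℝ} {p : ℝ}

lemma lintegral_ofReal_max_rpow_lt_top [IsFiniteMeasure μ] (hp : 0 ≤ p) {β : ℝ} (hpβ : p < β)
    (htail : ∀ᶠ x in atTop, μ.real (Ioi x) ≤ x ^ (-β)) :
    ∫⁻ x, ENNReal.ofReal (max x 0 ^ p) ∂μ < ∞ := by
  rcases hp.eq_or_lt with rfl | hp
  · simp
  obtain ⟨T, hT⟩ := eventually_atTop.mp (htail.and (eventually_gt_atTop 0))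
  rw [lintegral_rpow_eq_lintegral_meas_lt_mul μ (ae_of_all _ fun x => le_max_right x 0)
    (measurable_id.max measurable_const).aemeasurable hp]
  refine ENNReal.mul_lt_top ENNReal.ofReal_lt_top ?_
  rw [← Ioc_union_Ioi_eq_Ioi (hT T le_rfl).2.le]
  refine (lintegral_union_le _ _ _).trans_lt (ENNReal.add_lt_top.mpr ⟨?_, ?_⟩)
  · have hint : IntegrableOn (fun t : ℝ => t ^ (p - 1)) (Ioc 0 T) := by
      rw [← intervalIntegrable_iff_integrableOn_Ioc_of_le (hT T le_rfl).2.le]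
      exact intervalIntegral.intervalIntegrable_rpow' (by linarith)
    calc ∫⁻ t in Ioc 0 T, μ {a | t < max a 0} * ENNReal.ofReal (t ^ (p - 1))
        ≤ ∫⁻ t in Ioc 0 T, μ univ * ENNReal.ofReal (t ^ (p - 1)) :=
          lintegral_mono fun t => by gcongr; exact subset_univ _
      _ = μ univ * ∫⁻ t in Ioc 0 T, ENNReal.ofReal (t ^ (p - 1)) :=
          lintegral_const_mul' _ _ (measure_ne_top _ _)
      _ < ∞ := ENNReal.mul_lt_top (measure_lt_top _ _) hint.lintegral_lt_top
  · have hint : IntegrableOn (fun t : ℝ => t ^ (p - 1 - β)) (Ioi T) :=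
      (integrableOn_Ioi_rpow_iff (hT T le_rfl).2).mpr (by linarith)
    refine lt_of_le_of_lt (setLIntegral_mono (by fun_prop) fun t ht => ?_) hint.lintegral_lt_top
    obtain ⟨htβ, ht0⟩ := hT t (le_of_lt ht)
    have hset : {a : ℝ | t < max a 0} = Ioi t := by
      ext a; simp [ht0.not_gt]
    calc μ {a | t < max a 0} * ENNReal.ofReal (t ^ (p - 1))
        ≤ ENNReal.ofReal (t ^ (-β)) * ENNReal.ofReal (t ^ (p - 1)) := by
          rw [hset, ← ofReal_measureReal]
          gcongr
      _ = ENNReal.ofReal (t ^ (p - 1 - β)) := by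
          rw [← ENNReal.ofReal_mul (by positivity), ← Real.rpow_add ht0]
          ring_nf

lemma lintegral_ofReal_max_rpow_eq_top [IsFiniteMeasure μ] (hp : 0 ≤ p) {γ : ℝ} (hγp : γ < p)
    (htail : ∀ᶠ x in atTop, x ^ (-γ) ≤ μ.real (Ioi x)) :
    ∫⁻ x, ENNReal.ofReal (max x 0 ^ p) ∂μ = ∞ := by
  have hgrowth : Tendsto (fun t : ℝ => ENNReal.ofReal (t ^ (p - γ))) atTop (𝓝 ∞) :=
    ENNReal.tendsto_ofReal_atTop.comp (tendsto_rpow_atTop (by linarith))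
  refine top_le_iff.mp (le_of_tendsto hgrowth ?_)
  filter_upwards [htail, eventually_gt_atTop 0] with t ht ht0
  have hmarkov := mul_meas_ge_le_lintegral₀ (μ := μ)
    (f := fun x => ENNReal.ofReal (max x 0 ^ p)) (by fun_prop) (ENNReal.ofReal (t ^ p))
  have hsub : Ioi t ⊆ {x | ENNReal.ofReal (t ^ p) ≤ ENNReal.ofReal (max x 0 ^ p)} :=
    fun x hx => ENNReal.ofReal_le_ofReal
      (Real.rpow_le_rpow ht0.le ((le_of_lt hx).trans (le_max_left x 0)) hp)
  calc ENNReal.ofReal (t ^ (p - γ)) = ENNReal.ofReal (t ^ p) * ENNReal.ofReal (t ^ (-γ)) := by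
        rw [← ENNReal.ofReal_mul (by positivity), ← Real.rpow_add ht0, sub_eq_add_neg]
    _ ≤ ENNReal.ofReal (t ^ p) * μ (Ioi t) := by
        rw [← ofReal_measureReal]
        gcongr
    _ ≤ _ := (mul_le_mul_right (measure_mono hsub) _).trans hmarkov

end Moments

theorem stmt_3_general (μ : Measure ℝ) [IsProbabilityMeasure μ]
    (F : ℝ → ℝ) (hF : ∀ x, F x = (μ (Set.Iic x)).toReal)
    (α : ℝ) (hα : 0 < α)
    (htail : Tendsto (fun x : ℝ => -Real.log (1 - F x) / Real.log x) atTop (nhds α)) :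
    (∀ δ : ℝ, 0 < δ → δ ≤ α → ∫⁻ x, ENNReal.ofReal ((max x 0) ^ (α - δ)) ∂μ < ⊤) ∧
    (∀ δ : ℝ, 0 < δ → ∫⁻ x, ENNReal.ofReal ((max x 0) ^ (α + δ)) ∂μ = ⊤) := by
  simp only [one_sub_cdf_eq_measureReal_Ioi hF] at htail
  refine ⟨fun δ hδ hδα => ?_, fun δ hδ => ?_⟩
  · exact lintegral_ofReal_max_rpow_lt_top (by linarith) (by linarith : α - δ < α - δ / 2)
      (eventually_le_rpow_neg_of_tendsto_neg_log_div_log htail (by linarith))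
  · exact lintegral_ofReal_max_rpow_eq_top (by linarith) (by linarith : α + δ / 2 < α + δ)
      (eventually_rpow_neg_le_of_tendsto_neg_log_div_log (fun _ => measureReal_nonneg) hα htail
        (by linarith))

theorem stmt_3 (μ : Measure ℝ) [IsProbabilityMeasure μ]
    (F : ℝ → ℝ) (hF : ∀ x, F x = (μ (Set.Iic x)).toReal) (hcont : Continuous F)
    (α : ℝ) (hα : 0 < α)
    (htail : Tendsto (fun x : ℝ => -Real.log (1 - F x) / Real.log x) atTop (nhds α)) :
    (∀ δ : ℝ, 0 < δ → δ ≤ α → ∫⁻ x, ENNReal.ofReal ((max x 0) ^ (α - δ)) ∂μ < ⊤) ∧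
    (∀ δ : ℝ, 0 < δ → ∫⁻ x, ENNReal.ofReal ((max x 0) ^ (α + δ)) ∂μ = ⊤) :=
  stmt_3_general μ F hF α hα htail
end

section
/- Let k be a probability density on ℝ with cdf K, let G be a probability measure on ℝ × ℝ⁺ (location-scale pairs (μ,σ)), and let f(x) = ∫ (1/σ) k((x-μ)/σ) dG(μ,σ) with cdf F. Then for any m > 0, E_F[X_+^m] ≥ c_m · (E_{G_μ}[μ_+^m] · (1-K(0)) + E_K[X_+^m] · E_G[σ^m · 1(μ ≥ 0)]), where c_m = min(1, 2^{m-1}) and G_μ is the marginal of G in μ. -/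
open MeasureTheory Set
open scoped ENNReal

/-!
After Tonelli it suffices to bound each component `(μ, σ)` of the mixture. Substituting
`x = μ + σ y` turns its contribution into `∫ (μ + σ y)₊ ^ m k(y) dy`, and pointwise
`(μ + σ y)₊ ^ m ≥ c_m (μ₊ ^ m 1{y ≥ 0} + 1{μ ≥ 0} σ ^ m y₊ ^ m)` by the elementary inequality
`c_m (a ^ m + b ^ m) ≤ (a + b) ^ m` for `a, b ≥ 0`: superadditivity of `t ↦ t ^ m` when `m ≥ 1`,
concavity at the midpoint of `a` and `b` when `m < 1`.
-/

namespace Real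

lemma min_one_two_rpow_mul_add_rpow_le {p : ℝ} (hp : 0 < p) {a b : ℝ} (ha : 0 ≤ a)
    (hb : 0 ≤ b) : min 1 (2 ^ (p - 1)) * (a ^ p + b ^ p) ≤ (a + b) ^ p := by
  rcases le_or_gt 1 p with hp1 | hp1
  · calc min 1 (2 ^ (p - 1)) * (a ^ p + b ^ p) ≤ 1 * (a ^ p + b ^ p) := by
          gcongr
          exact min_le_left _ _
      _ ≤ (a + b) ^ p := by rw [one_mul]; exact add_rpow_le_rpow_add ha hb hp1
  · have hmin : min 1 ((2 : ℝ) ^ (p - 1)) = 2 ^ (p - 1) :=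
      min_eq_right (rpow_le_one_of_one_le_of_nonpos one_le_two (by linarith))
    have hmid : 1 / 2 * a ^ p + 1 / 2 * b ^ p ≤ (a + b) ^ p / 2 ^ p := by
      rw [← div_rpow (by positivity) zero_le_two, add_div]
      simpa [div_eq_inv_mul] using
        (concaveOn_rpow hp.le hp1.le).2 ha hb (by norm_num : (0 : ℝ) ≤ 1 / 2)
          (by norm_num : (0 : ℝ) ≤ 1 / 2) (by norm_num)
    calc min 1 (2 ^ (p - 1)) * (a ^ p + b ^ p) = 2 ^ p * (1 / 2 * a ^ p + 1 / 2 * b ^ p) := by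
          rw [hmin, rpow_sub_one two_ne_zero]; ring
      _ ≤ 2 ^ p * ((a + b) ^ p / 2 ^ p) := by gcongr
      _ = (a + b) ^ p := by field_simp

end Real

lemma lintegral_eq_ofReal_mul_lintegral_comp_add_mul {g : ℝ → ℝ≥0∞} (hg : Measurable g)
    (μ : ℝ) {σ : ℝ} (hσ : 0 < σ) :
    ∫⁻ x, g x = ENNReal.ofReal σ * ∫⁻ y, g (μ + σ * y) := by
  calc ∫⁻ x, g x = ∫⁻ x, g (μ + x) := (lintegral_add_left_eq_self g μ).symm
    _ = ∫⁻ x, g (μ + x) ∂(ENNReal.ofReal |σ| • Measure.map (σ * ·) volume) := by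
      rw [Real.smul_map_volume_mul_left hσ.ne']
    _ = ENNReal.ofReal σ * ∫⁻ y, g (μ + σ * y) := by
      rw [lintegral_smul_measure, lintegral_map (by fun_prop) (measurable_const_mul σ),
        abs_of_pos hσ, smul_eq_mul]

lemma lintegral_mul_ofReal_locationScale {g : ℝ → ℝ≥0∞} (hg : Measurable g) {k : ℝ → ℝ}
    (hk : Measurable k) (μ : ℝ) {σ : ℝ} (hσ : 0 < σ) :
    ∫⁻ x, g x * ENNReal.ofReal (1 / σ * k ((x - μ) / σ)) =
      ∫⁻ y, g (μ + σ * y) * ENNReal.ofReal (k y) := by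
  have hσ_inv : (0 : ℝ) ≤ 1 / σ := by positivity
  have hgk : Measurable fun x => g x * ENNReal.ofReal (k ((x - μ) / σ)) := by fun_prop
  simp_rw [ENNReal.ofReal_mul hσ_inv, mul_left_comm (g _)]
  rw [lintegral_const_mul' _ _ ENNReal.ofReal_ne_top,
    lintegral_eq_ofReal_mul_lintegral_comp_add_mul hgk μ hσ, ← mul_assoc,
    ← ENNReal.ofReal_mul hσ_inv, one_div_mul_cancel hσ.ne', ENNReal.ofReal_one, one_mul]
  congr! 4 with y
  rw [add_sub_cancel_left, mul_div_cancel_left₀ _ hσ.ne']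

lemma min_one_two_rpow_mul_le_posPart_add_rpow_mul {k : ℝ → ℝ} {m : ℝ} (hm : 0 < m)
    {p : ℝ × ℝ} (hp : 0 < p.2) (y : ℝ) :
    ENNReal.ofReal (min 1 (2 ^ (m - 1))) *
        (ENNReal.ofReal (max p.1 0 ^ m) * (Ici 0).indicator (fun y => ENNReal.ofReal (k y)) y +
          ENNReal.ofReal (max y 0 ^ m * k y) *
            {p : ℝ × ℝ | 0 ≤ p.1}.indicator (fun p => ENNReal.ofReal (p.2 ^ m)) p) ≤
      ENNReal.ofReal (max (p.1 + p.2 * y) 0 ^ m) * ENNReal.ofReal (k y) := by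
  by_cases hy : 0 ≤ y
  · by_cases hμ : 0 ≤ p.1
    · rw [indicator_of_mem (mem_Ici.mpr hy),
        indicator_of_mem (show p ∈ {q : ℝ × ℝ | 0 ≤ q.1} from hμ),
        max_eq_left hμ, max_eq_left hy, max_eq_left (by positivity),
        ENNReal.ofReal_mul (by positivity)]
      calc ENNReal.ofReal (min 1 (2 ^ (m - 1))) * (ENNReal.ofReal (p.1 ^ m) * ENNReal.ofReal (k y)
              + ENNReal.ofReal (y ^ m) * ENNReal.ofReal (k y) * ENNReal.ofReal (p.2 ^ m))
            = ENNReal.ofReal (min 1 (2 ^ (m - 1)) * (p.1 ^ m + (p.2 * y) ^ m)) *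
                ENNReal.ofReal (k y) := by
            rw [Real.mul_rpow hp.le hy, ENNReal.ofReal_mul (by positivity),
              ENNReal.ofReal_add (by positivity) (by positivity),
              ENNReal.ofReal_mul (by positivity)]
            ring
        _ ≤ ENNReal.ofReal ((p.1 + p.2 * y) ^ m) * ENNReal.ofReal (k y) := by
            gcongr
            exact Real.min_one_two_rpow_mul_add_rpow_le hm hμ (by positivity)
    · rw [indicator_of_notMem (show p ∉ {q : ℝ × ℝ | 0 ≤ q.1} from hμ),
        max_eq_right (not_le.mp hμ).le, Real.zero_rpow hm.ne']
      simp
  · rw [max_eq_right (not_le.mp hy).le, Real.zero_rpow hm.ne']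
    simp [hy]

lemma le_lintegral_posPart_rpow_mul_ofReal_locationScale {k : ℝ → ℝ} (hk : Measurable k)
    {m : ℝ} (hm : 0 < m) {p : ℝ × ℝ} (hp : 0 < p.2) :
    ENNReal.ofReal (min 1 (2 ^ (m - 1))) *
        (ENNReal.ofReal (max p.1 0 ^ m) * (∫⁻ y in Ici 0, ENNReal.ofReal (k y)) +
          (∫⁻ y, ENNReal.ofReal (max y 0 ^ m * k y)) *
            {p : ℝ × ℝ | 0 ≤ p.1}.indicator (fun p => ENNReal.ofReal (p.2 ^ m)) p) ≤
      ∫⁻ x, ENNReal.ofReal (max x 0 ^ m) * ENNReal.ofReal (1 / p.2 * k ((x - p.1) / p.2)) := by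
  rw [lintegral_mul_ofReal_locationScale (by fun_prop) hk p.1 hp,
    ← lintegral_indicator measurableSet_Ici, ← lintegral_const_mul' _ _ ENNReal.ofReal_ne_top,
    ← lintegral_mul_const _ (by fun_prop),
    ← lintegral_add_left (by fun_prop (disch := exact measurableSet_Ici)),
    ← lintegral_const_mul _ (by fun_prop (disch := exact measurableSet_Ici))]
  exact lintegral_mono fun y => min_one_two_rpow_mul_le_posPart_add_rpow_mul hm hp y

theorem stmt_7_general (k : ℝ → ℝ) (hk_meas : Measurable k)
    (G : Measure (ℝ × ℝ)) [IsProbabilityMeasure G] (hσ : ∀ᵐ p ∂G, 0 < p.2)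
    (m : ℝ) (hm : 0 < m)
    (f : ℝ → ℝ≥0∞)
    (hf : ∀ x, f x = ∫⁻ p, ENNReal.ofReal ((1 / p.2) * k ((x - p.1) / p.2)) ∂G) :
    ENNReal.ofReal (min 1 (2 ^ (m - 1))) *
        ((∫⁻ p, ENNReal.ofReal ((max p.1 0) ^ m) ∂G) *
            (∫⁻ y in Set.Ici (0 : ℝ), ENNReal.ofReal (k y)) +
          (∫⁻ y, ENNReal.ofReal ((max y 0) ^ m * k y)) *
            (∫⁻ p in {p : ℝ × ℝ | 0 ≤ p.1}, ENNReal.ofReal (p.2 ^ m) ∂G)) ≤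
      ∫⁻ x, ENNReal.ofReal ((max x 0) ^ m) * f x := by
  have hS : MeasurableSet {p : ℝ × ℝ | 0 ≤ p.1} := measurableSet_le measurable_const measurable_fst
  calc _ = ∫⁻ p, ENNReal.ofReal (min 1 (2 ^ (m - 1))) *
          (ENNReal.ofReal (max p.1 0 ^ m) * (∫⁻ y in Ici 0, ENNReal.ofReal (k y)) +
            (∫⁻ y, ENNReal.ofReal (max y 0 ^ m * k y)) *
              {p : ℝ × ℝ | 0 ≤ p.1}.indicator (fun p => ENNReal.ofReal (p.2 ^ m)) p) ∂G := by
        rw [lintegral_const_mul _ (by fun_prop), lintegral_add_left (by fun_prop),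
          lintegral_mul_const _ (by fun_prop), lintegral_const_mul _ (by fun_prop),
          lintegral_indicator hS]
    _ ≤ ∫⁻ p, (∫⁻ x, ENNReal.ofReal (max x 0 ^ m) *
          ENNReal.ofReal (1 / p.2 * k ((x - p.1) / p.2))) ∂G :=
        lintegral_mono_ae <| hσ.mono fun p hp =>
          le_lintegral_posPart_rpow_mul_ofReal_locationScale hk_meas hm hp
    _ = ∫⁻ x, ENNReal.ofReal (max x 0 ^ m) * f x := by
        rw [lintegral_lintegral_swap (by fun_prop)]
        refine lintegral_congr fun x => ?_
        rw [hf, lintegral_const_mul' _ _ ENNReal.ofReal_ne_top]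

theorem stmt_7 (k : ℝ → ℝ) (hk_meas : Measurable k) (hk_nonneg : ∀ x, 0 ≤ k x)
    (hk_int : ∫⁻ x, ENNReal.ofReal (k x) = 1)
    (G : Measure (ℝ × ℝ)) [IsProbabilityMeasure G] (hσ : ∀ᵐ p ∂G, 0 < p.2)
    (m : ℝ) (hm : 0 < m)
    (f : ℝ → ℝ≥0∞)
    (hf : ∀ x, f x = ∫⁻ p, ENNReal.ofReal ((1 / p.2) * k ((x - p.1) / p.2)) ∂G) :
    ENNReal.ofReal (min 1 (2 ^ (m - 1))) *
        ((∫⁻ p, ENNReal.ofReal ((max p.1 0) ^ m) ∂G) *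
            (∫⁻ y in Set.Ici (0 : ℝ), ENNReal.ofReal (k y)) +
          (∫⁻ y, ENNReal.ofReal ((max y 0) ^ m * k y)) *
            (∫⁻ p in {p : ℝ × ℝ | 0 ≤ p.1}, ENNReal.ofReal (p.2 ^ m) ∂G)) ≤
      ∫⁻ x, ENNReal.ofReal ((max x 0) ^ m) * f x :=
  stmt_7_general k hk_meas G hσ m hm f hf
end

section
/- Let k be a probability density on ℝ with cdf K, G a probability measure on ℝ × ℝ⁺, and f(x) = ∫ (1/σ) k((x-μ)/σ) dG(μ,σ) with cdf F. Then for any m > 0, E_F[X_+^m] ≥ C_m^{-1} · E_K[X_+^m] · E_{G_σ}[σ^m] − E_{G_μ}[μ_-^m], where C_m = max(1, 2^{m-1}), G_μ and G_σ are the marginals of G, and μ_- = max(-μ, 0). -/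
/-!
Write a component of the mixture as `X = μ + σ Y` with `Y ∼ k`. Pointwise,
`σ Y₊ ≤ (μ + σ Y)₊ + μ₋`, and `(a + b)^m ≤ C_m (a^m + b^m)` for `a, b ≥ 0`, so
`σ^m E[Y₊^m] ≤ C_m (E[X₊^m] + μ₋^m)`. Integrating this over `G` (Tonelli) gives the claim.
-/

open MeasureTheory
open scoped ENNReal

lemma add_rpow_le_max_mul_add_rpow {m : ℝ} (hm : 0 ≤ m) {a b : ℝ} (ha : 0 ≤ a)
    (hb : 0 ≤ b) :
    (a + b) ^ m ≤ max 1 (2 ^ (m - 1)) * (a ^ m + b ^ m) := by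
  have hsum : 0 ≤ a ^ m + b ^ m := by positivity
  lift a to NNReal using ha
  lift b to NNReal using hb
  rcases le_total m 1 with h1 | h1
  · calc ((a : ℝ) + b) ^ m ≤ a ^ m + b ^ m := mod_cast NNReal.rpow_add_le_add_rpow a b hm h1
      _ ≤ max 1 (2 ^ (m - 1)) * (a ^ m + b ^ m) := le_mul_of_one_le_left hsum (le_max_left _ _)
  · calc ((a : ℝ) + b) ^ m ≤ 2 ^ (m - 1) * (a ^ m + b ^ m) :=
          mod_cast NNReal.rpow_add_le_mul_rpow_add_rpow a b h1
      _ ≤ max 1 (2 ^ (m - 1)) * (a ^ m + b ^ m) := by gcongr; exact le_max_right _ _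

lemma rpow_mul_max_rpow_le {m σ : ℝ} (hm : 0 ≤ m) (hσ : 0 < σ) (μ y : ℝ) :
    σ ^ m * (max y 0) ^ m ≤
      max 1 (2 ^ (m - 1)) * ((max (μ + σ * y) 0) ^ m + (max (-μ) 0) ^ m) := by
  have hsplit : max (σ * y) 0 ≤ max (μ + σ * y) 0 + max (-μ) 0 :=
    max_le (by linarith [le_max_left (μ + σ * y) 0, le_max_left (-μ) 0]) (by positivity)
  calc σ ^ m * (max y 0) ^ m = (max (σ * y) 0) ^ m := by
        rw [← Real.mul_rpow hσ.le (le_max_right _ _), mul_max_of_nonneg _ _ hσ.le, mul_zero]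
    _ ≤ (max (μ + σ * y) 0 + max (-μ) 0) ^ m :=
        Real.rpow_le_rpow (le_max_right _ _) hsplit hm
    _ ≤ _ := add_rpow_le_max_mul_add_rpow hm (le_max_right _ _) (le_max_right _ _)

lemma lintegral_comp_affine {h : ℝ → ℝ≥0∞} (hh : Measurable h) {σ : ℝ} (hσ : 0 < σ)
    (μ : ℝ) :
    ∫⁻ x, h x = ENNReal.ofReal σ * ∫⁻ y, h (μ + σ * y) := by
  have hmap : ∫⁻ z, h (μ + z) ∂(Measure.map (σ * ·) volume) = ∫⁻ y, h (μ + σ * y) :=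
    lintegral_map (hh.comp (measurable_const_add μ)) (measurable_const_mul σ)
  rw [← hmap, Real.map_volume_mul_left hσ.ne', lintegral_smul_measure,
    lintegral_add_left_eq_self h μ, smul_eq_mul, ← mul_assoc, abs_of_pos (inv_pos.2 hσ),
    ← ENNReal.ofReal_mul hσ.le, mul_inv_cancel₀ hσ.ne', ENNReal.ofReal_one, one_mul]

lemma lintegral_mul_scaled_density {k : ℝ → ℝ} (hk : Measurable k) {g : ℝ → ℝ≥0∞}
    (hg : Measurable g) {σ : ℝ} (hσ : 0 < σ) (μ : ℝ) :
    ∫⁻ x, g x * ENNReal.ofReal ((1 / σ) * k ((x - μ) / σ)) =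
      ∫⁻ y, g (μ + σ * y) * ENNReal.ofReal (k y) := by
  have hcancel (y : ℝ) : (μ + σ * y - μ) / σ = y := by field_simp; ring
  rw [lintegral_comp_affine (by fun_prop) hσ μ]
  simp only [hcancel, ENNReal.ofReal_mul (one_div_pos.2 hσ).le, mul_left_comm (g _)]
  rw [lintegral_const_mul _ (by fun_prop), ← mul_assoc, ← ENNReal.ofReal_mul hσ.le,
    mul_one_div_cancel hσ.ne', ENNReal.ofReal_one, one_mul]

lemma lintegral_mul_locationScaleMixture {k : ℝ → ℝ} (hk : Measurable k)
    {G : Measure (ℝ × ℝ)} [SFinite G] (hσ : ∀ᵐ p ∂G, 0 < p.2) {g : ℝ → ℝ≥0∞}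
    (hg : Measurable g) :
    ∫⁻ x, g x * ∫⁻ p, ENNReal.ofReal ((1 / p.2) * k ((x - p.1) / p.2)) ∂G =
      ∫⁻ p, ∫⁻ y, g (p.1 + p.2 * y) * ENNReal.ofReal (k y) ∂volume ∂G := by
  have hpull (x : ℝ) : g x * ∫⁻ p, ENNReal.ofReal ((1 / p.2) * k ((x - p.1) / p.2)) ∂G =
      ∫⁻ p, g x * ENNReal.ofReal ((1 / p.2) * k ((x - p.1) / p.2)) ∂G :=
    (lintegral_const_mul _ (by fun_prop)).symm
  rw [lintegral_congr hpull, lintegral_lintegral_swap (by fun_prop)]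
  exact lintegral_congr_ae (hσ.mono fun p hp => lintegral_mul_scaled_density hk hg hp p.1)

lemma rpow_mul_lintegral_max_rpow_le {k : ℝ → ℝ} (hk : Measurable k)
    (hk_nonneg : ∀ x, 0 ≤ k x) (hk_int : ∫⁻ x, ENNReal.ofReal (k x) = 1) {m σ : ℝ}
    (hm : 0 ≤ m) (hσ : 0 < σ) (μ : ℝ) :
    ENNReal.ofReal (σ ^ m) * ∫⁻ y, ENNReal.ofReal ((max y 0) ^ m * k y) ≤
      ENNReal.ofReal (max 1 (2 ^ (m - 1))) *
        ((∫⁻ y, ENNReal.ofReal ((max (μ + σ * y) 0) ^ m) * ENNReal.ofReal (k y)) +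
          ENNReal.ofReal ((max (-μ) 0) ^ m)) := by
  set C : ℝ := max 1 (2 ^ (m - 1))
  have hpoint (y : ℝ) : ENNReal.ofReal (σ ^ m) * ENNReal.ofReal ((max y 0) ^ m * k y) ≤
      ENNReal.ofReal C * (ENNReal.ofReal ((max (μ + σ * y) 0) ^ m) * ENNReal.ofReal (k y) +
        ENNReal.ofReal ((max (-μ) 0) ^ m) * ENNReal.ofReal (k y)) := by
    have hreal := mul_le_mul_of_nonneg_right (rpow_mul_max_rpow_le hm hσ μ y) (hk_nonneg y)
    calc ENNReal.ofReal (σ ^ m) * ENNReal.ofReal ((max y 0) ^ m * k y)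
        = ENNReal.ofReal (σ ^ m * (max y 0) ^ m * k y) := by
          rw [← ENNReal.ofReal_mul (by positivity), mul_assoc]
      _ ≤ ENNReal.ofReal (C * ((max (μ + σ * y) 0) ^ m + (max (-μ) 0) ^ m) * k y) :=
          ENNReal.ofReal_le_ofReal hreal
      _ = _ := by
          rw [ENNReal.ofReal_mul (by positivity), ENNReal.ofReal_mul (by positivity),
            ENNReal.ofReal_add (by positivity) (by positivity)]
          ring
  calc ENNReal.ofReal (σ ^ m) * ∫⁻ y, ENNReal.ofReal ((max y 0) ^ m * k y)
      = ∫⁻ y, ENNReal.ofReal (σ ^ m) * ENNReal.ofReal ((max y 0) ^ m * k y) :=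
        (lintegral_const_mul' _ _ ENNReal.ofReal_ne_top).symm
    _ ≤ _ := lintegral_mono hpoint
    _ = _ := by
        rw [lintegral_const_mul' _ _ ENNReal.ofReal_ne_top, lintegral_add_left (by fun_prop),
          lintegral_const_mul' _ _ ENNReal.ofReal_ne_top, hk_int, mul_one]

theorem stmt_8 (k : ℝ → ℝ) (hk_meas : Measurable k) (hk_nonneg : ∀ x, 0 ≤ k x)
    (hk_int : ∫⁻ x, ENNReal.ofReal (k x) = 1)
    (G : Measure (ℝ × ℝ)) [IsProbabilityMeasure G] (hσ : ∀ᵐ p ∂G, 0 < p.2)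
    (m : ℝ) (hm : 0 < m)
    (f : ℝ → ℝ≥0∞)
    (hf : ∀ x, f x = ∫⁻ p, ENNReal.ofReal ((1 / p.2) * k ((x - p.1) / p.2)) ∂G) :
    (ENNReal.ofReal (max 1 (2 ^ (m - 1))))⁻¹ *
        (∫⁻ y, ENNReal.ofReal ((max y 0) ^ m * k y)) *
        (∫⁻ p, ENNReal.ofReal (p.2 ^ m) ∂G) -
      (∫⁻ p, ENNReal.ofReal ((max (-p.1) 0) ^ m) ∂G) ≤
      ∫⁻ x, ENNReal.ofReal ((max x 0) ^ m) * f x := by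
  set C := ENNReal.ofReal (max 1 (2 ^ (m - 1)))
  set A := ∫⁻ y, ENNReal.ofReal ((max y 0) ^ m * k y)
  set B := ∫⁻ p, ENNReal.ofReal (p.2 ^ m) ∂G
  set M := ∫⁻ p, ENNReal.ofReal ((max (-p.1) 0) ^ m) ∂G
  set R := ∫⁻ x, ENNReal.ofReal ((max x 0) ^ m) * f x
  have hR : R = ∫⁻ p, ∫⁻ y,
      ENNReal.ofReal ((max (p.1 + p.2 * y) 0) ^ m) * ENNReal.ofReal (k y) ∂volume ∂G := by
    simp_rw [R, hf]
    exact lintegral_mul_locationScaleMixture hk_meas hσ (by fun_prop)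
  have hbound : A * B ≤ C * (R + M) :=
    calc A * B = ∫⁻ p, ENNReal.ofReal (p.2 ^ m) * A ∂G := by
          rw [lintegral_mul_const _ (by fun_prop), mul_comm]
      _ ≤ ∫⁻ p, C * ((∫⁻ y,
            ENNReal.ofReal ((max (p.1 + p.2 * y) 0) ^ m) * ENNReal.ofReal (k y)) +
              ENNReal.ofReal ((max (-p.1) 0) ^ m)) ∂G :=
          lintegral_mono_ae (hσ.mono fun p hp =>
            rpow_mul_lintegral_max_rpow_le hk_meas hk_nonneg hk_int hm.le hp p.1)
      _ = C * (R + M) := by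
          rw [lintegral_const_mul' _ _ ENNReal.ofReal_ne_top, lintegral_add_left (by fun_prop),
            hR]
  have hC0 : C ≠ 0 := (ENNReal.ofReal_pos.2 (one_pos.trans_le (le_max_left _ _))).ne'
  rw [tsub_le_iff_right, mul_assoc]
  calc C⁻¹ * (A * B) ≤ C⁻¹ * (C * (R + M)) := by gcongr
    _ = R + M := ENNReal.inv_mul_cancel_left hC0 ENNReal.ofReal_ne_top
end

section
/- Let k be a probability density on ℝ with cdf K, G a probability measure on ℝ × ℝ⁺, and f(x) = ∫ (1/σ) k((x-μ)/σ) dG(μ,σ) with cdf F. Then for any m > 0, E_F[X_+^m] ≤ C_m · (E_{G_μ}[μ_+^m] + E_K[X_+^m] · E_{G_σ}[σ^m]), where C_m = max(1, 2^{m-1}). -/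
/-!
By Tonelli, the moment of the mixture is the `G`-average of the moments of the components.
The substitution `x = μ + σ y` turns the component `(μ, σ)` into the law of `μ + σ Y` with
`Y ~ k`, and `(μ + σ y)₊ ≤ μ₊ + σ y₊` together with `(A + B)ᵐ ≤ max 1 2ᵐ⁻¹ (Aᵐ + Bᵐ)`
(subadditivity of `t ↦ tᵐ` for `m ≤ 1`, convexity for `m ≥ 1`) bounds it by
`C_m (μ₊ᵐ + σᵐ E_K[X₊ᵐ])`.
-/

open MeasureTheory
open scoped ENNReal

namespace ENNReal

theorem rpow_add_le_max_mul_rpow_add_rpow (A B : ℝ≥0∞) {m : ℝ} (hm : 0 ≤ m) :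
    (A + B) ^ m ≤ ENNReal.ofReal (max 1 (2 ^ (m - 1))) * (A ^ m + B ^ m) := by
  rcases le_total m 1 with hm1 | hm1
  · calc (A + B) ^ m ≤ A ^ m + B ^ m := rpow_add_le_add_rpow A B hm hm1
      _ ≤ _ := le_mul_of_one_le_left zero_le (one_le_ofReal.mpr (le_max_left _ _))
  · calc (A + B) ^ m ≤ 2 ^ (m - 1) * (A ^ m + B ^ m) := rpow_add_le_mul_rpow_add_rpow A B hm1
      _ ≤ _ := by
        gcongr
        rw [← ofReal_ofNat, ofReal_rpow_of_pos two_pos]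
        exact ofReal_le_ofReal (le_max_right _ _)

theorem ofReal_max_zero_rpow (x : ℝ) {m : ℝ} (hm : 0 < m) :
    ENNReal.ofReal (max x 0 ^ m) = ENNReal.ofReal x ^ m := by
  rcases le_or_gt x 0 with hx | hx
  · rw [max_eq_right hx, Real.zero_rpow hm.ne', ofReal_zero, ofReal_eq_zero.mpr hx,
      zero_rpow_of_pos hm]
  · rw [max_eq_left hx.le, ofReal_rpow_of_pos hx]

theorem ofReal_add_mul_rpow_le (a y : ℝ) {s m : ℝ} (hs : 0 ≤ s) (hm : 0 ≤ m) :
    ENNReal.ofReal (a + s * y) ^ m ≤ ENNReal.ofReal (max 1 (2 ^ (m - 1))) *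
      (ENNReal.ofReal a ^ m + ENNReal.ofReal s ^ m * ENNReal.ofReal y ^ m) :=
  calc ENNReal.ofReal (a + s * y) ^ m
      ≤ (ENNReal.ofReal a + ENNReal.ofReal s * ENNReal.ofReal y) ^ m := by
        rw [← ofReal_mul hs]
        exact rpow_le_rpow ofReal_add_le hm
    _ ≤ _ := by
        rw [← mul_rpow_of_nonneg _ _ hm]
        exact rpow_add_le_max_mul_rpow_add_rpow _ _ hm

end ENNReal

theorem lintegral_comp_add_mul (g : ℝ → ℝ≥0∞) (a : ℝ) {s : ℝ} (hs : 0 < s) :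
    ∫⁻ y, g (a + s * y) = ENNReal.ofReal s⁻¹ * ∫⁻ x, g x := by
  rw [← (measurableEmbedding_mulLeft₀ hs.ne').lintegral_map (fun x => g (a + x)),
    Real.map_volume_mul_left hs.ne', lintegral_smul_measure, abs_of_pos (inv_pos.mpr hs),
    lintegral_add_left_eq_self (fun x => g x) a, smul_eq_mul]

theorem lintegral_mul_ofReal_scaled_density (g : ℝ → ℝ≥0∞) (k : ℝ → ℝ) (a : ℝ) {s : ℝ}
    (hs : 0 < s) :
    ∫⁻ x, g x * ENNReal.ofReal ((1 / s) * k ((x - a) / s)) =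
      ∫⁻ y, g (a + s * y) * ENNReal.ofReal (k y) := by
  have hcv := lintegral_comp_add_mul
    (fun x => g x * ENNReal.ofReal ((1 / s) * k ((x - a) / s))) a hs
  simp only [add_sub_cancel_left, mul_div_cancel_left₀ _ hs.ne'] at hcv
  have hs' : ENNReal.ofReal s⁻¹ ≠ 0 := by simpa using hs
  rw [← ENNReal.mul_right_inj hs' ENNReal.ofReal_ne_top, ← hcv,
    ← lintegral_const_mul' _ _ ENNReal.ofReal_ne_top]
  congr 1 with y
  rw [one_div, ENNReal.ofReal_mul (inv_nonneg.mpr hs.le)]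
  ring

theorem lintegral_ofReal_add_mul_rpow_mul_le {φ : ℝ → ℝ≥0∞} (hφ : Measurable φ) (a : ℝ)
    {s m : ℝ} (hs : 0 ≤ s) (hm : 0 ≤ m) :
    ∫⁻ y, ENNReal.ofReal (a + s * y) ^ m * φ y ≤ ENNReal.ofReal (max 1 (2 ^ (m - 1))) *
      (ENNReal.ofReal a ^ m * (∫⁻ y, φ y) +
        ENNReal.ofReal s ^ m * ∫⁻ y, ENNReal.ofReal y ^ m * φ y) :=
  calc ∫⁻ y, ENNReal.ofReal (a + s * y) ^ m * φ y
      ≤ ∫⁻ y, ENNReal.ofReal (max 1 (2 ^ (m - 1))) * (ENNReal.ofReal a ^ m * φ y +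
          ENNReal.ofReal s ^ m * (ENNReal.ofReal y ^ m * φ y)) := by
        refine lintegral_mono fun y => ?_
        grw [ENNReal.ofReal_add_mul_rpow_le a y hs hm]
        rw [mul_assoc, add_mul, mul_assoc]
    _ = _ := by
        rw [lintegral_const_mul' _ _ ENNReal.ofReal_ne_top, lintegral_add_left (hφ.const_mul _),
          lintegral_const_mul _ hφ, lintegral_const_mul _ (by fun_prop)]

theorem stmt_9_general (k : ℝ → ℝ) (hk_meas : Measurable k)
    (hk_int : ∫⁻ x, ENNReal.ofReal (k x) = 1)
    (G : Measure (ℝ × ℝ)) [IsProbabilityMeasure G] (hσ : ∀ᵐ p ∂G, 0 < p.2)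
    (m : ℝ) (hm : 0 < m)
    (f : ℝ → ℝ≥0∞)
    (hf : ∀ x, f x = ∫⁻ p, ENNReal.ofReal ((1 / p.2) * k ((x - p.1) / p.2)) ∂G) :
    ∫⁻ x, ENNReal.ofReal ((max x 0) ^ m) * f x ≤
      ENNReal.ofReal (max 1 (2 ^ (m - 1))) *
        ((∫⁻ p, ENNReal.ofReal ((max p.1 0) ^ m) ∂G) +
          (∫⁻ y, ENNReal.ofReal ((max y 0) ^ m * k y)) *
            (∫⁻ p, ENNReal.ofReal (p.2 ^ m) ∂G)) := by
  set C := ENNReal.ofReal (max 1 (2 ^ (m - 1)))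
  set I := ∫⁻ y, ENNReal.ofReal y ^ m * ENNReal.ofReal (k y)
  have hI : ∫⁻ y, ENNReal.ofReal ((max y 0) ^ m * k y) = I := by
    congr 1 with y
    rw [ENNReal.ofReal_mul (by positivity), ENNReal.ofReal_max_zero_rpow y hm]
  have hσm : ∫⁻ p, ENNReal.ofReal (p.2 ^ m) ∂G = ∫⁻ p, ENNReal.ofReal p.2 ^ m ∂G := by
    refine lintegral_congr_ae ?_
    filter_upwards [hσ] with p hp using (ENNReal.ofReal_rpow_of_pos hp).symm
  have hjoint : Measurable fun z : ℝ × (ℝ × ℝ) =>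
      ENNReal.ofReal z.1 ^ m * ENNReal.ofReal ((1 / z.2.2) * k ((z.1 - z.2.1) / z.2.2)) := by
    fun_prop
  calc ∫⁻ x, ENNReal.ofReal ((max x 0) ^ m) * f x
      = ∫⁻ x, ∫⁻ p, ENNReal.ofReal x ^ m *
          ENNReal.ofReal ((1 / p.2) * k ((x - p.1) / p.2)) ∂G := by
        congr 1 with x
        rw [hf, ENNReal.ofReal_max_zero_rpow x hm,
          lintegral_const_mul' _ _ (ENNReal.rpow_ne_top_of_nonneg hm.le ENNReal.ofReal_ne_top)]
    _ = ∫⁻ p, (∫⁻ x, ENNReal.ofReal x ^ m *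
          ENNReal.ofReal ((1 / p.2) * k ((x - p.1) / p.2))) ∂G :=
        lintegral_lintegral_swap hjoint.aemeasurable
    _ ≤ ∫⁻ p, C * (ENNReal.ofReal p.1 ^ m + I * ENNReal.ofReal p.2 ^ m) ∂G := by
        refine lintegral_mono_ae ?_
        filter_upwards [hσ] with p hp
        rw [lintegral_mul_ofReal_scaled_density _ _ _ hp, mul_comm I]
        simpa only [hk_int, mul_one] using
          lintegral_ofReal_add_mul_rpow_mul_le hk_meas.ennreal_ofReal p.1 hp.le hm.le
    _ = C * ((∫⁻ p, ENNReal.ofReal ((max p.1 0) ^ m) ∂G) +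
          I * ∫⁻ p, ENNReal.ofReal (p.2 ^ m) ∂G) := by
        simp_rw [ENNReal.ofReal_max_zero_rpow _ hm, hσm]
        rw [lintegral_const_mul _ (by fun_prop), lintegral_add_left (by fun_prop),
          lintegral_const_mul _ (by fun_prop)]
    _ = _ := by rw [hI]

theorem stmt_9 (k : ℝ → ℝ) (hk_meas : Measurable k) (hk_nonneg : ∀ x, 0 ≤ k x)
    (hk_int : ∫⁻ x, ENNReal.ofReal (k x) = 1)
    (G : Measure (ℝ × ℝ)) [IsProbabilityMeasure G] (hσ : ∀ᵐ p ∂G, 0 < p.2)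
    (m : ℝ) (hm : 0 < m)
    (f : ℝ → ℝ≥0∞)
    (hf : ∀ x, f x = ∫⁻ p, ENNReal.ofReal ((1 / p.2) * k ((x - p.1) / p.2)) ∂G) :
    ∫⁻ x, ENNReal.ofReal ((max x 0) ^ m) * f x ≤
      ENNReal.ofReal (max 1 (2 ^ (m - 1))) *
        ((∫⁻ p, ENNReal.ofReal ((max p.1 0) ^ m) ∂G) +
          (∫⁻ y, ENNReal.ofReal ((max y 0) ^ m * k y)) *
            (∫⁻ p, ENNReal.ofReal (p.2 ^ m) ∂G)) :=
  stmt_9_general k hk_meas hk_int G hσ m hm f hf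
end

section
/- Let k be a probability density with full support on ℝ and cdf K, and let G be a probability measure on ℝ × ℝ⁺ whose marginals G_μ and G_σ have all positive moments finite (E_{G_μ}[|μ|^m] < ∞ and E_{G_σ}[σ^m] < ∞ for all m > 0). Let F be the cdf of the mixture f(x) = ∫ (1/σ)k((x-μ)/σ) dG(μ,σ). Then the right tail index of F equals the right tail index of K: α_+(F) = α_+(K). -/
/-!
Write `T = 1 - K` and `S = 1 - F` for the survival functions. Swapping the integrals gives
`S x = ∫ T ((x - μ) / σ) dG(μ, σ)`. On a set of positive `G`-mass where `|μ| ≤ r` and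
`σ ≥ 1 / r` the argument is at most `2 r x`, so `S x ≥ c T (2 r x)`: a linear rescaling does not
change the tail index, whence `α_+(F) ≤ α_+(K)`. Conversely, split at the threshold `x ^ (1 - δ)`:
`S x ≤ T (x ^ (1 - δ)) + G((x - μ) / σ < x ^ (1 - δ))`, and the last event forces `|μ| ≥ x / 2`
or `σ ≥ x ^ δ / 2`, which by Markov's inequality and the finiteness of all moments has probability
`O(x ^ (-β))` for every `β`. For `β < β' < α_+(K)` we have `T y ≤ y ^ (-β')`, so the choice
`1 - δ = β / β'` gives `S x = O(x ^ (-β))`, whence `α_+(K) ≤ α_+(F)`.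
-/

open MeasureTheory Filter Set Real
open scoped ENNReal Topology

/-- `HasTailIndex (1 - F) α` says that `α_+(F) = α`. -/
def HasTailIndex (S : ℝ → ℝ) (α : EReal) : Prop :=
  Tendsto (fun x => ((-log (S x) / log x : ℝ) : EReal)) atTop (𝓝 α)

theorem tendsto_coe_sub_log_div_log (β C : ℝ) :
    Tendsto (fun x => ((β - log C / log x : ℝ) : EReal)) atTop (𝓝 β) := by
  refine EReal.tendsto_coe.2 ?_
  simpa using tendsto_const_nhds.sub (tendsto_const_nhds.div_atTop tendsto_log_atTop)

namespace HasTailIndex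

variable {S T : ℝ → ℝ} {α α' : EReal}

theorem coe_le_of_le_mul_rpow (hS : HasTailIndex S α) (hS0 : ∀ᶠ x in atTop, 0 < S x)
    {C β : ℝ} (hC : 0 < C) (hle : ∀ᶠ x in atTop, S x ≤ C * x ^ (-β)) : (β : EReal) ≤ α := by
  refine le_of_tendsto_of_tendsto (tendsto_coe_sub_log_div_log β C) hS ?_
  filter_upwards [hS0, hle, eventually_gt_atTop 1] with x hx0 hx hx1
  have hlogx : 0 < log x := log_pos hx1
  have hlog : log (S x) ≤ log C - β * log x := by
    calc log (S x) ≤ log (C * x ^ (-β)) := log_le_log hx0 hx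
      _ = log C - β * log x := by
        rw [log_mul hC.ne' (by positivity), log_rpow (by linarith)]; ring
  refine EReal.coe_le_coe_iff.2 ?_
  rw [le_div_iff₀ hlogx, sub_mul, div_mul_cancel₀ _ hlogx.ne']
  linarith

theorem le_coe_of_mul_rpow_le (hS : HasTailIndex S α) {c γ : ℝ} (hc : 0 < c)
    (hle : ∀ᶠ x in atTop, c * x ^ (-γ) ≤ S x) : α ≤ γ := by
  refine le_of_tendsto_of_tendsto hS (tendsto_coe_sub_log_div_log γ c) ?_
  filter_upwards [hle, eventually_gt_atTop 1] with x hx hx1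
  have hlogx : 0 < log x := log_pos hx1
  have hlog : log c - γ * log x ≤ log (S x) := by
    calc log c - γ * log x = log (c * x ^ (-γ)) := by
          rw [log_mul hc.ne' (by positivity), log_rpow (by linarith)]; ring
      _ ≤ log (S x) := log_le_log (by positivity) hx
  refine EReal.coe_le_coe_iff.2 ?_
  rw [div_le_iff₀ hlogx, sub_mul, div_mul_cancel₀ _ hlogx.ne']
  linarith

theorem nonneg (hS : HasTailIndex S α) (hS0 : ∀ᶠ x in atTop, 0 < S x)
    (hS1 : ∀ᶠ x in atTop, S x ≤ 1) : 0 ≤ α := by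
  simpa using hS.coe_le_of_le_mul_rpow hS0 one_pos (β := 0) (by simpa using hS1)

theorem eventually_le_rpow (hS : HasTailIndex S α) {β : ℝ} (hβ : (β : EReal) < α) :
    ∀ᶠ x in atTop, S x ≤ x ^ (-β) := by
  filter_upwards [hS.eventually (eventually_gt_nhds hβ), eventually_gt_atTop 1] with x hx hx1
  have hlogx : 0 < log x := log_pos hx1
  rcases le_or_gt (S x) 0 with hSx | hSx
  · exact hSx.trans (by positivity)
  have hlt : β * log x < -log (S x) := (lt_div_iff₀ hlogx).1 (EReal.coe_lt_coe_iff.1 hx)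
  refine (log_le_log_iff hSx (by positivity)).1 ?_
  rw [log_rpow (by linarith)]
  linarith

theorem eventually_rpow_le (hS : HasTailIndex S α) (hS0 : ∀ᶠ x in atTop, 0 < S x) {γ : ℝ}
    (hγ : α < γ) : ∀ᶠ x in atTop, x ^ (-γ) ≤ S x := by
  filter_upwards [hS.eventually (eventually_lt_nhds hγ), hS0, eventually_gt_atTop 1]
    with x hx hSx hx1
  have hlogx : 0 < log x := log_pos hx1
  have hlt : -log (S x) < γ * log x := (div_lt_iff₀ hlogx).1 (EReal.coe_lt_coe_iff.1 hx)
  refine (log_le_log_iff (by positivity) hSx).1 ?_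
  rw [log_rpow (by linarith)]
  linarith

theorem le_of_forall_le_mul_rpow (hS : HasTailIndex S α) (hS0 : ∀ᶠ x in atTop, 0 < S x)
    (hS1 : ∀ᶠ x in atTop, S x ≤ 1)
    (h : ∀ β : ℝ, 0 < β → (β : EReal) < α' → ∃ C > 0, ∀ᶠ x in atTop, S x ≤ C * x ^ (-β)) :
    α' ≤ α := by
  refine EReal.ge_of_forall_gt_iff_ge.1 fun β hβ => ?_
  rcases le_or_gt β 0 with hβ0 | hβ0
  · exact (EReal.coe_le_coe_iff.2 hβ0).trans (hS.nonneg hS0 hS1)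
  obtain ⟨C, hC, hle⟩ := h β hβ0 hβ
  exact hS.coe_le_of_le_mul_rpow hS0 hC hle

theorem le_of_mul_le_comp_mul (hS : HasTailIndex S α) (hT : HasTailIndex T α')
    (hT0 : ∀ᶠ y in atTop, 0 < T y) {c a : ℝ} (hc : 0 < c)
    (ha : 0 < a) (hle : ∀ᶠ x in atTop, c * T (a * x) ≤ S x) : α ≤ α' := by
  refine EReal.le_of_forall_lt_iff_le.1 fun γ hγ => ?_
  refine hS.le_coe_of_mul_rpow_le (c := c * a ^ (-γ)) (by positivity) ?_
  have hax : Tendsto (a * ·) atTop atTop := tendsto_id.const_mul_atTop ha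
  filter_upwards [hle, hax.eventually (hT.eventually_rpow_le hT0 hγ), eventually_gt_atTop 0]
    with x hx hTx hx0
  calc c * a ^ (-γ) * x ^ (-γ) = c * (a * x) ^ (-γ) := by
        rw [mul_rpow ha.le hx0.le, mul_assoc]
    _ ≤ c * T (a * x) := by gcongr
    _ ≤ S x := hx

end HasTailIndex

theorem meas_ge_le_ofReal_mul_rpow_neg {Ω : Type*} [MeasurableSpace Ω] {μ : Measure Ω}
    {w : Ω → ℝ} (hw : AEMeasurable w μ) {a m E : ℝ} (ha : 0 < a) (hm : 0 ≤ m)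
    (hE : ∫⁻ ω, ENNReal.ofReal (w ω ^ m) ∂μ ≤ ENNReal.ofReal E) :
    μ {ω | a ≤ w ω} ≤ ENNReal.ofReal (E * a ^ (-m)) := by
  have hsub : {ω | a ≤ w ω} ⊆ {ω | ENNReal.ofReal (a ^ m) ≤ ENNReal.ofReal (w ω ^ m)} :=
    fun ω hω => ENNReal.ofReal_le_ofReal (rpow_le_rpow ha.le hω hm)
  have hmarkov : ENNReal.ofReal (a ^ m) * μ {ω | a ≤ w ω} ≤ ENNReal.ofReal E :=
    (mul_le_mul_right (measure_mono hsub) _).trans <|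
      (mul_meas_ge_le_lintegral₀ (hw.pow_const m).ennreal_ofReal _).trans hE
  rw [rpow_neg ha.le, ← div_eq_mul_inv, ENNReal.ofReal_div_of_pos (by positivity),
    ENNReal.le_div_iff_mul_le (Or.inl (by simp [rpow_pos_of_pos ha]))
      (Or.inl ENNReal.ofReal_ne_top), mul_comm]
  exact hmarkov

theorem setLIntegral_locationScale_eq_preimage {k : ℝ → ℝ} (hk : Measurable k) {σ : ℝ}
    (hσ : 0 < σ) (μ : ℝ) {s : Set ℝ} (hs : MeasurableSet s) :
    ∫⁻ t in s, ENNReal.ofReal ((1 / σ) * k ((t - μ) / σ)) =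
      ∫⁻ u in (fun u => σ * u + μ) ⁻¹' s, ENNReal.ofReal (k u) := by
  have hmap : Measure.map (fun t => (t - μ) / σ) volume = ENNReal.ofReal σ • volume := by
    have : (fun t : ℝ => (t - μ) / σ) = (σ⁻¹ * ·) ∘ (· - μ) := by
      funext t; simp [div_eq_inv_mul]
    rw [this, ← Measure.map_map (measurable_const_mul _) (measurable_sub_const μ),
      map_sub_right_eq_self, Real.map_volume_mul_left (inv_ne_zero hσ.ne'), inv_inv,
      abs_of_pos hσ]
  have hpre : (fun t => (t - μ) / σ) ⁻¹' ((fun u => σ * u + μ) ⁻¹' s) = s := by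
    ext t; simp only [mem_preimage]; rw [mul_div_cancel₀ _ hσ.ne', sub_add_cancel]
  have hsubst := setLIntegral_map (μ := volume)
    (hs.preimage (by fun_prop : Measurable fun u : ℝ => σ * u + μ))
    (by fun_prop : Measurable fun u => ENNReal.ofReal (k u))
    (by fun_prop : Measurable fun t : ℝ => (t - μ) / σ)
  rw [hmap, hpre, Measure.restrict_smul, lintegral_smul_measure] at hsubst
  simp_rw [ENNReal.ofReal_mul (one_div_nonneg.2 hσ.le)]
  rw [lintegral_const_mul _ (by fun_prop), ← hsubst, smul_eq_mul, ← mul_assoc,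
    ← ENNReal.ofReal_mul (one_div_nonneg.2 hσ.le), one_div_mul_cancel hσ.ne',
    ENNReal.ofReal_one, one_mul]

theorem withDensity_measureReal_Ioi {μ : Measure ℝ} {g : ℝ → ℝ≥0∞}
    [IsProbabilityMeasure (μ.withDensity g)] (x : ℝ) :
    (μ.withDensity g).real (Ioi x) = 1 - (∫⁻ t in Iic x, g t ∂μ).toReal := by
  rw [← compl_Iic, probReal_compl_eq_one_sub measurableSet_Iic, measureReal_def,
    withDensity_apply _ measurableSet_Iic]

/-- `ρ` is the law of `σ X + μ` with `X ∼ ν` independent of `(μ, σ) ∼ G`. -/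
def IsLocationScaleMixture (ρ ν : Measure ℝ) (G : Measure (ℝ × ℝ)) : Prop :=
  ∀ s, MeasurableSet s → ρ s = ∫⁻ p, ν ((fun u => p.2 * u + p.1) ⁻¹' s) ∂G

theorem isLocationScaleMixture_withDensity {k : ℝ → ℝ} (hk : Measurable k)
    {G : Measure (ℝ × ℝ)} [SFinite G] (hσ : ∀ᵐ p ∂G, 0 < p.2) :
    IsLocationScaleMixture
      (volume.withDensity fun t => ∫⁻ p, ENNReal.ofReal ((1 / p.2) * k ((t - p.1) / p.2)) ∂G)
      (volume.withDensity fun t => ENNReal.ofReal (k t)) G := by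
  intro s hs
  rw [withDensity_apply _ hs, lintegral_lintegral_swap (by fun_prop)]
  refine lintegral_congr_ae ?_
  filter_upwards [hσ] with p hp
  rw [withDensity_apply _ (hs.preimage (by fun_prop)),
    setLIntegral_locationScale_eq_preimage hk hp p.1 hs]

namespace IsLocationScaleMixture

variable {ρ ν : Measure ℝ} {G : Measure (ℝ × ℝ)}

theorem isProbabilityMeasure [IsProbabilityMeasure ν] [IsProbabilityMeasure G]
    (hρ : IsLocationScaleMixture ρ ν G) : IsProbabilityMeasure ρ :=
  ⟨by simp [hρ _ MeasurableSet.univ]⟩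

theorem apply_Ioi (hρ : IsLocationScaleMixture ρ ν G) (hσ : ∀ᵐ p ∂G, 0 < p.2) (x : ℝ) :
    ρ (Ioi x) = ∫⁻ p, ν (Ioi ((x - p.1) / p.2)) ∂G := by
  rw [hρ _ measurableSet_Ioi]
  refine lintegral_congr_ae ?_
  filter_upwards [hσ] with p hp
  congr 1
  ext u
  simp only [mem_preimage, mem_Ioi, div_lt_iff₀ hp]
  constructor <;> intro h <;> linarith

end IsLocationScaleMixture

section TailBounds

variable {Ω : Type*} [MeasurableSpace Ω] {G : Measure Ω} {g : Ω → ℝ}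

theorem lintegral_measure_Ioi_comp_le [IsProbabilityMeasure G] (ν : Measure ℝ)
    [IsProbabilityMeasure ν] (hg : Measurable g) (y : ℝ) :
    ∫⁻ ω, ν (Ioi (g ω)) ∂G ≤ ν (Ioi y) + G {ω | g ω < y} := by
  calc ∫⁻ ω, ν (Ioi (g ω)) ∂G ≤ ∫⁻ ω, ν (Ioi y) + {ω | g ω < y}.indicator 1 ω ∂G := by
        refine lintegral_mono fun ω => ?_
        by_cases h : g ω < y
        · simpa [h] using prob_le_one.trans le_add_self
        · simpa [h] using measure_mono (Ioi_subset_Ioi (not_lt.1 h))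
    _ = ν (Ioi y) + G {ω | g ω < y} := by
        rw [lintegral_add_left measurable_const, lintegral_const, measure_univ, mul_one,
          lintegral_indicator_one (measurableSet_lt hg measurable_const)]

theorem mul_measure_le_lintegral_measure_Ioi_comp (ν : Measure ℝ) (hg : Measurable g)
    {A : Set Ω} {c : ℝ} (hA : ∀ ω ∈ A, g ω ≤ c) :
    ν (Ioi c) * G A ≤ ∫⁻ ω, ν (Ioi (g ω)) ∂G := by
  have hanti : Antitone fun y => ν (Ioi y) := fun _ _ h => measure_mono (Ioi_subset_Ioi h)
  calc ν (Ioi c) * G A ≤ ν (Ioi c) * G {ω | ν (Ioi c) ≤ ν (Ioi (g ω))} :=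
        mul_le_mul_right (measure_mono fun ω hω => hanti (hA ω hω)) _
    _ ≤ ∫⁻ ω, ν (Ioi (g ω)) ∂G := mul_meas_ge_le_lintegral (hanti.measurable.comp hg) _

end TailBounds

section LocationScale

variable {G : Measure (ℝ × ℝ)}

theorem exists_pos_measure_abs_fst_le_and_inv_le_snd [NeZero G] (hσ : ∀ᵐ p ∂G, 0 < p.2) :
    ∃ r > 0, 0 < G {p | |p.1| ≤ r ∧ r⁻¹ ≤ p.2} := by
  have hcover : {p : ℝ × ℝ | 0 < p.2} ⊆
      ⋃ n : ℕ, {p | |p.1| ≤ (n : ℝ) + 1 ∧ ((n : ℝ) + 1)⁻¹ ≤ p.2} := by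
    intro p hp
    obtain ⟨n, hn⟩ := exists_nat_ge (max |p.1| p.2⁻¹)
    refine mem_iUnion.2 ⟨n, ?_, ?_⟩
    · linarith [le_max_left |p.1| p.2⁻¹]
    · rw [inv_le_comm₀ (by positivity) hp]
      linarith [le_max_right |p.1| p.2⁻¹]
  have hpos : G {p : ℝ × ℝ | 0 < p.2} ≠ 0 := fun h0 => by
    obtain ⟨p, hp, hp'⟩ := (hσ.and (measure_eq_zero_iff_ae_notMem.1 h0)).exists
    exact hp' hp
  obtain ⟨n, hn⟩ := exists_measure_pos_of_not_measure_iUnion_null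
    fun h => hpos (measure_mono_null hcover h)
  exact ⟨(n : ℝ) + 1, by positivity, hn⟩

theorem exists_measure_sub_div_lt_rpow_le (hσ : ∀ᵐ p ∂G, 0 < p.2) {β δ : ℝ} (hβ : 0 < β)
    (hδ : 0 < δ) (hμ : ∫⁻ p, ENNReal.ofReal (|p.1| ^ β) ∂G < ⊤)
    (hσm : ∫⁻ p, ENNReal.ofReal (p.2 ^ (β / δ)) ∂G < ⊤) :
    ∃ C, 0 ≤ C ∧ ∀ x, 0 < x →
      G {p | (x - p.1) / p.2 < x ^ (1 - δ)} ≤ ENNReal.ofReal (C * x ^ (-β)) := by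
  set E₁ := (∫⁻ p, ENNReal.ofReal (|p.1| ^ β) ∂G).toReal
  set E₂ := (∫⁻ p, ENNReal.ofReal (p.2 ^ (β / δ)) ∂G).toReal
  refine ⟨2 ^ β * E₁ + 2 ^ (β / δ) * E₂, by positivity, fun x hx => ?_⟩
  -- `x - μ < σ x ^ (1 - δ)` forces `x / 2 ≤ |μ|` or `x ^ δ / 2 ≤ σ`, as `x ^ δ * x ^ (1 - δ) = x`
  have hsplit : {p : ℝ × ℝ | (x - p.1) / p.2 < x ^ (1 - δ)} ≤ᵐ[G]
      ({p | x / 2 ≤ |p.1|} ∪ {p | x ^ δ / 2 ≤ p.2} : Set (ℝ × ℝ)) := by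
    filter_upwards [hσ] with p hp hlt
    change (x - p.1) / p.2 < x ^ (1 - δ) at hlt
    change x / 2 ≤ |p.1| ∨ x ^ δ / 2 ≤ p.2
    rw [div_lt_iff₀ hp] at hlt
    by_contra! hout
    have hx1 : x ^ δ * x ^ (1 - δ) = x := by rw [← rpow_add hx]; simp
    have := mul_lt_mul_of_pos_right hout.2 (rpow_pos_of_pos hx (1 - δ))
    linarith [le_abs_self p.1]
  have h₁ : G {p | x / 2 ≤ |p.1|} ≤ ENNReal.ofReal (E₁ * (x / 2) ^ (-β)) :=
    meas_ge_le_ofReal_mul_rpow_neg (by fun_prop) (by positivity) hβ.le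
      (ENNReal.ofReal_toReal hμ.ne).ge
  have h₂ : G {p | x ^ δ / 2 ≤ p.2} ≤ ENNReal.ofReal (E₂ * (x ^ δ / 2) ^ (-(β / δ))) :=
    meas_ge_le_ofReal_mul_rpow_neg (by fun_prop) (by positivity) (by positivity)
      (ENNReal.ofReal_toReal hσm.ne).ge
  have hx₁ : (x / 2) ^ (-β) = 2 ^ β * x ^ (-β) := by
    rw [div_rpow hx.le zero_le_two, rpow_neg zero_le_two, div_inv_eq_mul, mul_comm]
  have hx₂ : (x ^ δ / 2) ^ (-(β / δ)) = 2 ^ (β / δ) * x ^ (-β) := by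
    rw [div_rpow (by positivity) zero_le_two, rpow_neg zero_le_two, div_inv_eq_mul,
      ← rpow_mul hx.le, mul_neg, mul_div_cancel₀ _ hδ.ne', mul_comm]
  calc G {p | (x - p.1) / p.2 < x ^ (1 - δ)}
      ≤ G {p | x / 2 ≤ |p.1|} + G {p | x ^ δ / 2 ≤ p.2} :=
        (measure_mono_ae hsplit).trans (measure_union_le _ _)
    _ ≤ ENNReal.ofReal (E₁ * (x / 2) ^ (-β)) + ENNReal.ofReal (E₂ * (x ^ δ / 2) ^ (-(β / δ))) :=
        add_le_add h₁ h₂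
    _ = ENNReal.ofReal ((2 ^ β * E₁ + 2 ^ (β / δ) * E₂) * x ^ (-β)) := by
        rw [← ENNReal.ofReal_add (by positivity) (by positivity), hx₁, hx₂]
        ring_nf

namespace IsLocationScaleMixture

variable {ρ ν : Measure ℝ}

theorem exists_mul_le_measureReal_Ioi [IsProbabilityMeasure G] [IsFiniteMeasure ρ]
    (hρ : IsLocationScaleMixture ρ ν G) (hσ : ∀ᵐ p ∂G, 0 < p.2) :
    ∃ c > 0, ∃ a > 0, ∀ᶠ x in atTop, c * ν.real (Ioi (a * x)) ≤ ρ.real (Ioi x) := by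
  obtain ⟨r, hr, hA⟩ := exists_pos_measure_abs_fst_le_and_inv_le_snd hσ
  refine ⟨_, ENNReal.toReal_pos hA.ne' (measure_ne_top _ _), 2 * r, by positivity, ?_⟩
  filter_upwards [eventually_ge_atTop r] with x hx
  rw [mul_comm, measureReal_def, measureReal_def, ← ENNReal.toReal_mul]
  refine ENNReal.toReal_mono (measure_ne_top _ _) ?_
  rw [hρ.apply_Ioi hσ]
  refine mul_measure_le_lintegral_measure_Ioi_comp ν (by fun_prop) fun p ⟨hμ, hσp⟩ => ?_
  -- `(x - μ) / σ ≤ 2 x / σ ≤ 2 r x` once `x ≥ r`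
  have hσ0 : 0 < p.2 := (inv_pos.2 hr).trans_le hσp
  rw [div_le_iff₀ hσ0]
  have hrσ : 1 ≤ r * p.2 := by rwa [inv_le_iff_one_le_mul₀' hr] at hσp
  nlinarith [neg_abs_le p.1]

theorem exists_measureReal_Ioi_le_mul_rpow [IsProbabilityMeasure G] [IsProbabilityMeasure ν]
    (hρ : IsLocationScaleMixture ρ ν G) (hσ : ∀ᵐ p ∂G, 0 < p.2)
    (hμmom : ∀ m : ℝ, 0 < m → ∫⁻ p, ENNReal.ofReal (|p.1| ^ m) ∂G < ⊤)
    (hσmom : ∀ m : ℝ, 0 < m → ∫⁻ p, ENNReal.ofReal (p.2 ^ m) ∂G < ⊤)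
    {α : EReal} (hν : HasTailIndex (fun y => ν.real (Ioi y)) α) {β : ℝ} (hβ : 0 < β)
    (hβα : (β : EReal) < α) :
    ∃ C > 0, ∀ᶠ x in atTop, ρ.real (Ioi x) ≤ C * x ^ (-β) := by
  obtain ⟨β', hββ', hβ'α⟩ := EReal.exists_between_coe_real hβα
  have hββ' : β < β' := EReal.coe_lt_coe_iff.1 hββ'
  have hβ' : 0 < β' := hβ.trans hββ'
  -- at the threshold `y = x ^ (β / β')` the bound `ν (Ioi y) ≤ y ^ (-β')` reads `x ^ (-β)`
  set δ := 1 - β / β'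
  have hδ : 0 < δ := by
    have : β / β' < 1 := (div_lt_one hβ').2 hββ'
    linarith
  have hexp : 1 - δ = β / β' := by ring
  obtain ⟨C, hC, hbad⟩ := exists_measure_sub_div_lt_rpow_le hσ hβ hδ (hμmom β hβ)
    (hσmom _ (div_pos hβ hδ))
  have hy : Tendsto (fun x : ℝ => x ^ (1 - δ)) atTop atTop :=
    tendsto_rpow_atTop (by rw [hexp]; positivity)
  refine ⟨1 + C, by positivity, ?_⟩
  filter_upwards [hy.eventually (hν.eventually_le_rpow hβ'α), eventually_gt_atTop 0]
    with x hνx hx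
  have hνx' : ν (Ioi (x ^ (1 - δ))) ≤ ENNReal.ofReal (x ^ (-β)) := by
    rw [← ofReal_measureReal]
    refine ENNReal.ofReal_le_ofReal (hνx.trans_eq ?_)
    rw [← rpow_mul hx.le, hexp]
    congr 1
    field_simp
  rw [measureReal_def, hρ.apply_Ioi hσ]
  refine ENNReal.toReal_le_of_le_ofReal (by positivity) ?_
  calc ∫⁻ p, ν (Ioi ((x - p.1) / p.2)) ∂G
      ≤ ν (Ioi (x ^ (1 - δ))) + G {p | (x - p.1) / p.2 < x ^ (1 - δ)} :=
        lintegral_measure_Ioi_comp_le ν (by fun_prop) _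
    _ ≤ ENNReal.ofReal (x ^ (-β)) + ENNReal.ofReal (C * x ^ (-β)) := add_le_add hνx' (hbad x hx)
    _ = ENNReal.ofReal ((1 + C) * x ^ (-β)) := by
        rw [← ENNReal.ofReal_add (by positivity) (by positivity)]
        ring_nf

end IsLocationScaleMixture

end LocationScale

theorem stmt_10 (k : ℝ → ℝ) (hk_meas : Measurable k) (hk_pos : ∀ x, 0 < k x)
    (hk_int : ∫⁻ x, ENNReal.ofReal (k x) = 1)
    (G : Measure (ℝ × ℝ)) [IsProbabilityMeasure G] (hσ : ∀ᵐ p ∂G, 0 < p.2)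
    (hμmom : ∀ m : ℝ, 0 < m → ∫⁻ p, ENNReal.ofReal (|p.1| ^ m) ∂G < ⊤)
    (hσmom : ∀ m : ℝ, 0 < m → ∫⁻ p, ENNReal.ofReal (p.2 ^ m) ∂G < ⊤)
    (K F : ℝ → ℝ)
    (hK : ∀ x, K x = (∫⁻ t in Set.Iic x, ENNReal.ofReal (k t)).toReal)
    (hF : ∀ x, F x = (∫⁻ t in Set.Iic x,
        ∫⁻ p, ENNReal.ofReal ((1 / p.2) * k ((t - p.1) / p.2)) ∂G).toReal)
    (αK αF : EReal)
    (hαK : Tendsto (fun x : ℝ => ((-Real.log (1 - K x) / Real.log x : ℝ) : EReal))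
      atTop (nhds αK))
    (hαF : Tendsto (fun x : ℝ => ((-Real.log (1 - F x) / Real.log x : ℝ) : EReal))
      atTop (nhds αF)) :
    αF = αK := by
  set ν := volume.withDensity fun t => ENNReal.ofReal (k t)
  set ρ := volume.withDensity fun t =>
    ∫⁻ p, ENNReal.ofReal ((1 / p.2) * k ((t - p.1) / p.2)) ∂G
  have hρ : IsLocationScaleMixture ρ ν G := isLocationScaleMixture_withDensity hk_meas hσ
  have : IsProbabilityMeasure ν :=
    ⟨by rw [withDensity_apply _ .univ, Measure.restrict_univ, hk_int]⟩
  have : IsProbabilityMeasure ρ := hρ.isProbabilityMeasure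
  have hKν : ∀ x, 1 - K x = ν.real (Ioi x) := fun x => by
    rw [hK]; exact (withDensity_measureReal_Ioi x).symm
  have hFρ : ∀ x, 1 - F x = ρ.real (Ioi x) := fun x => by
    rw [hF]; exact (withDensity_measureReal_Ioi x).symm
  have hν : HasTailIndex (fun y => ν.real (Ioi y)) αK := hαK.congr fun x => by rw [hKν]
  have hρα : HasTailIndex (fun x => ρ.real (Ioi x)) αF := hαF.congr fun x => by rw [hFρ]
  have hν0 : ∀ y, 0 < ν.real (Ioi y) := fun y => by
    refine ENNReal.toReal_pos ?_ (measure_ne_top _ _)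
    rw [withDensity_apply _ measurableSet_Ioi, ← pos_iff_ne_zero,
      setLIntegral_pos_iff (by fun_prop)]
    simp [Function.support, hk_pos]
  obtain ⟨c, hc, a, ha, hlow⟩ := hρ.exists_mul_le_measureReal_Ioi hσ
  have hρ0 : ∀ᶠ x in atTop, 0 < ρ.real (Ioi x) :=
    hlow.mono fun x hx => (mul_pos hc (hν0 _)).trans_le hx
  refine le_antisymm (hρα.le_of_mul_le_comp_mul hν (.of_forall hν0) hc ha hlow) ?_
  exact hρα.le_of_forall_le_mul_rpow hρ0 (.of_forall fun _ => measureReal_le_one)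
    fun β hβ hβα => hρ.exists_measureReal_Ioi_le_mul_rpow hσ hμmom hσmom hν hβ hβα
end

section
/- Let F(x) = Σ_{i=1}^N w_i K((x-μ_i)/σ_i) be a finite location-scale mixture with weights w_i > 0 summing to 1, σ_i > 0, where K is the cdf of a density k with full support on ℝ and right tail index α_+(K). Then α_+(F) = α_+(K); in particular the tail index of a finite location-scale mixture does not depend on the mixing parameters (w_i, μ_i, σ_i). -/
/-!
The survival function `S = 1 - K` is positive and antitone, and
`1 - F(x) = ∑ wᵢ S((x - μᵢ)/σᵢ)`. Hence, with `a = max μᵢ` and `b = max σᵢ`,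
`w₀ S((x - μ₀)/σ₀) ≤ 1 - F(x) ≤ S((x - a)/b)` for `x ≥ a`.
The ratio `-log S(y) / log x` is unaffected by an affine change `y = (x - a)/b`, since
`log y / log x → 1`, nor by a constant factor in front of `S`, which only adds `O(1/log x)`;
so both bounds, and with them `1 - F`, have tail index `α_+(K)`.
-/

open MeasureTheory Filter Set
open scoped ENNReal Topology

namespace EReal

variable {α : Type*} {l : Filter α} {f g : α → ℝ} {a : EReal}

lemma tendsto_coe_mul_of_tendsto_one (hf : Tendsto (fun x => (f x : EReal)) l (𝓝 a))
    (hg : Tendsto g l (𝓝 1)) : Tendsto (fun x => ((f x * g x : ℝ) : EReal)) l (𝓝 a) := by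
  have h := EReal.Tendsto.mul hf (tendsto_coe.2 hg) (Or.inr (coe_ne_bot 1))
    (Or.inr (coe_ne_top 1)) (Or.inr one_ne_zero) (Or.inr one_ne_zero)
  simpa only [coe_one, mul_one, ← coe_mul] using h

lemma tendsto_coe_add_of_tendsto_zero (hf : Tendsto (fun x => (f x : EReal)) l (𝓝 a))
    (hg : Tendsto g l (𝓝 0)) : Tendsto (fun x => ((f x + g x : ℝ) : EReal)) l (𝓝 a) := by
  have hadd : ContinuousAt (fun p : EReal × EReal => p.1 + p.2) (a, (0 : ℝ)) :=
    continuousAt_add (Or.inr (coe_ne_bot 0)) (Or.inr (coe_ne_top 0))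
  have h := hadd.tendsto.comp (hf.prodMk_nhds (tendsto_coe.2 hg))
  simpa only [Function.comp_def, coe_zero, add_zero, ← coe_add] using h

end EReal

lemma Real.tendsto_inv_log_atTop : Tendsto (fun x => (Real.log x)⁻¹) atTop (𝓝 0) :=
  tendsto_inv_atTop_zero.comp Real.tendsto_log_atTop

lemma Real.tendsto_log_div_log_of_tendsto_div {y : ℝ → ℝ} {c : ℝ} (hc : 0 < c)
    (hy : Tendsto (fun x => y x / x) atTop (𝓝 c)) :
    Tendsto (fun x => Real.log (y x) / Real.log x) atTop (𝓝 1) := by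
  have hdiff : Tendsto (fun x => Real.log (y x / x)) atTop (𝓝 (Real.log c)) :=
    (Real.continuousAt_log hc.ne').tendsto.comp hy
  have h := (hdiff.mul Real.tendsto_inv_log_atTop).const_add 1
  rw [mul_zero, add_zero] at h
  refine h.congr' ?_
  filter_upwards [hy.eventually (eventually_gt_nhds hc), eventually_gt_atTop 1] with x hyx_pos hx
  have hyx : y x ≠ 0 := by rintro h; simp [h] at hyx_pos
  have hlog : Real.log x ≠ 0 := (Real.log_pos hx).ne'
  rw [Real.log_div hyx (by positivity)]
  field_simp
  ring

/-- For a survival function `S = 1 - F`, the tail index `α_+(F)` is the limit at `+∞`. -/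
noncomputable def logTailRatio (S : ℝ → ℝ) (x : ℝ) : EReal :=
  ((-Real.log (S x) / Real.log x : ℝ) : EReal)

section logTailRatio

variable {S T U : ℝ → ℝ} {α : EReal}

lemma tendsto_logTailRatio_comp (hS : Tendsto (logTailRatio S) atTop (𝓝 α)) {y : ℝ → ℝ}
    (hy : Tendsto y atTop atTop)
    (hlog : Tendsto (fun x => Real.log (y x) / Real.log x) atTop (𝓝 1)) :
    Tendsto (logTailRatio (S ∘ y)) atTop (𝓝 α) := by
  refine (EReal.tendsto_coe_mul_of_tendsto_one (hS.comp hy) hlog).congr' ?_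
  filter_upwards [hy.eventually_gt_atTop 1] with x hx
  have hlog : Real.log (y x) ≠ 0 := (Real.log_pos hx).ne'
  simp only [logTailRatio, Function.comp_apply]
  rw [div_mul_div_cancel₀ hlog]

lemma tendsto_logTailRatio_comp_affine (hS : Tendsto (logTailRatio S) atTop (𝓝 α)) (a : ℝ)
    {b : ℝ} (hb : 0 < b) :
    Tendsto (logTailRatio fun x => S ((x - a) / b)) atTop (𝓝 α) := by
  have hy : Tendsto (fun x => (x - a) / b) atTop atTop :=
    (tendsto_atTop_add_const_right atTop (-a) tendsto_id).atTop_div_const hb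
  have hratio : Tendsto (fun x => (x - a) / b / x) atTop (𝓝 b⁻¹) := by
    have h := (tendsto_const_nhds (x := 1)).sub (tendsto_inv_atTop_zero.const_mul a)
      |>.mul_const b⁻¹
    rw [mul_zero, sub_zero, one_mul] at h
    refine h.congr' ?_
    filter_upwards [eventually_ne_atTop 0] with x hx
    field_simp
  exact tendsto_logTailRatio_comp hS hy
    (Real.tendsto_log_div_log_of_tendsto_div (inv_pos.2 hb) hratio)

lemma tendsto_logTailRatio_const_mul (hS : Tendsto (logTailRatio S) atTop (𝓝 α)) {c : ℝ}
    (hc : 0 < c) (hS0 : ∀ᶠ x in atTop, S x ≠ 0) :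
    Tendsto (logTailRatio fun x => c * S x) atTop (𝓝 α) := by
  have hconst : Tendsto (fun x => -Real.log c / Real.log x) atTop (𝓝 0) := by
    simpa only [div_eq_mul_inv, mul_zero] using
      Real.tendsto_inv_log_atTop.const_mul (-Real.log c)
  refine (EReal.tendsto_coe_add_of_tendsto_zero hS hconst).congr' ?_
  filter_upwards [hS0] with x hx
  simp only [logTailRatio]
  rw [Real.log_mul hc.ne' hx]
  ring_nf

lemma tendsto_logTailRatio_of_le_of_le (hT : Tendsto (logTailRatio T) atTop (𝓝 α))
    (hU : Tendsto (logTailRatio U) atTop (𝓝 α)) (hT0 : ∀ᶠ x in atTop, 0 < T x)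
    (hTS : ∀ᶠ x in atTop, T x ≤ S x) (hSU : ∀ᶠ x in atTop, S x ≤ U x) :
    Tendsto (logTailRatio S) atTop (𝓝 α) := by
  have hlog : ∀ᶠ x in atTop, 0 < Real.log x := Real.tendsto_log_atTop.eventually_gt_atTop 0
  refine tendsto_of_tendsto_of_tendsto_of_le_of_le' hU hT ?_ ?_
  · filter_upwards [hlog, hT0, hTS, hSU] with x hx hT0 hTS hSU
    refine EReal.coe_le_coe_iff.2 (div_le_div_of_nonneg_right ?_ hx.le)
    exact neg_le_neg (Real.log_le_log (hT0.trans_le hTS) hSU)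
  · filter_upwards [hlog, hT0, hTS] with x hx hT0 hTS
    refine EReal.coe_le_coe_iff.2 (div_le_div_of_nonneg_right ?_ hx.le)
    exact neg_le_neg (Real.log_le_log hT0 hTS)

end logTailRatio

section Density

variable {k : ℝ → ℝ}

lemma setLIntegral_Ioi_ne_top (hk_int : ∫⁻ t, ENNReal.ofReal (k t) = 1) (x : ℝ) :
    ∫⁻ t in Ioi x, ENNReal.ofReal (k t) ≠ ∞ :=
  ne_top_of_le_ne_top (hk_int ▸ ENNReal.one_ne_top) (setLIntegral_le_lintegral _ _)

lemma one_sub_toReal_setLIntegral_Iic (hk_int : ∫⁻ t, ENNReal.ofReal (k t) = 1) (x : ℝ) :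
    1 - (∫⁻ t in Iic x, ENNReal.ofReal (k t)).toReal
      = (∫⁻ t in Ioi x, ENNReal.ofReal (k t)).toReal := by
  have hsum := lintegral_add_compl (μ := volume) (fun t => ENNReal.ofReal (k t))
    (measurableSet_Iic (a := x))
  rw [compl_Iic, hk_int] at hsum
  have hIic : ∫⁻ t in Iic x, ENNReal.ofReal (k t) ≠ ∞ :=
    ne_top_of_le_ne_top ENNReal.one_ne_top (hsum ▸ le_self_add)
  rw [← ENNReal.toReal_one, ← hsum, ENNReal.toReal_add hIic (setLIntegral_Ioi_ne_top hk_int x)]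
  ring

lemma antitone_toReal_setLIntegral_Ioi (hk_int : ∫⁻ t, ENNReal.ofReal (k t) = 1) :
    Antitone fun x => (∫⁻ t in Ioi x, ENNReal.ofReal (k t)).toReal := fun _ _ hxy =>
  ENNReal.toReal_mono (setLIntegral_Ioi_ne_top hk_int _) (lintegral_mono_set (Ioi_subset_Ioi hxy))

lemma toReal_setLIntegral_Ioi_pos (hk_meas : Measurable k) (hk_pos : ∀ x, 0 < k x)
    (hk_int : ∫⁻ t, ENNReal.ofReal (k t) = 1) (x : ℝ) :
    0 < (∫⁻ t in Ioi x, ENNReal.ofReal (k t)).toReal := by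
  refine ENNReal.toReal_pos ?_ (setLIntegral_Ioi_ne_top hk_int x)
  rw [← pos_iff_ne_zero, setLIntegral_pos_iff hk_meas.ennreal_ofReal]
  have hsupp : Function.support (fun t => ENNReal.ofReal (k t)) = univ :=
    Function.support_eq_univ fun t => ENNReal.ofReal_pos.2 (hk_pos t) |>.ne'
  simp [hsupp]

end Density

lemma one_sub_sum_mul_eq_sum_mul_one_sub {ι : Type*} (s : Finset ι) {w : ι → ℝ}
    (hw : ∑ i ∈ s, w i = 1) (f : ι → ℝ) :
    1 - ∑ i ∈ s, w i * f i = ∑ i ∈ s, w i * (1 - f i) := by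
  simp only [mul_sub, mul_one, Finset.sum_sub_distrib, hw]

lemma sum_mul_comp_affine_le {ι : Type*} [Fintype ι] {S : ℝ → ℝ} (hS : Antitone S)
    {w μ σ : ι → ℝ} (hw : ∀ i, 0 ≤ w i) (hwsum : ∑ i, w i = 1) (hσ : ∀ i, 0 < σ i)
    {a b x : ℝ} (hμa : ∀ i, μ i ≤ a) (hσb : ∀ i, σ i ≤ b) (hxa : a ≤ x) :
    ∑ i, w i * S ((x - μ i) / σ i) ≤ S ((x - a) / b) := calc
  ∑ i, w i * S ((x - μ i) / σ i) ≤ ∑ i, w i * S ((x - a) / b) :=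
    Finset.sum_le_sum fun i _ => mul_le_mul_of_nonneg_left
      (hS (div_le_div₀ (by linarith [hμa i]) (by linarith [hμa i]) (hσ i) (hσb i))) (hw i)
  _ = S ((x - a) / b) := by rw [← Finset.sum_mul, hwsum, one_mul]

theorem stmt_12 (k : ℝ → ℝ) (hk_meas : Measurable k) (hk_pos : ∀ x, 0 < k x)
    (hk_int : ∫⁻ x, ENNReal.ofReal (k x) = 1)
    (K : ℝ → ℝ) (hK : ∀ x, K x = (∫⁻ t in Set.Iic x, ENNReal.ofReal (k t)).toReal)
    (N : ℕ) (hN : 0 < N) (w μ σ : Fin N → ℝ)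
    (hw : ∀ i, 0 < w i) (hwsum : ∑ i, w i = 1) (hσ : ∀ i, 0 < σ i)
    (F : ℝ → ℝ) (hF : ∀ x, F x = ∑ i, w i * K ((x - μ i) / σ i))
    (αK : EReal)
    (hαK : Tendsto (fun x : ℝ => ((-Real.log (1 - K x) / Real.log x : ℝ) : EReal))
      atTop (nhds αK)) :
    Tendsto (fun x : ℝ => ((-Real.log (1 - F x) / Real.log x : ℝ) : EReal))
      atTop (nhds αK) := by
  set S : ℝ → ℝ := fun x => 1 - K x
  have hS : S = fun x => (∫⁻ t in Ioi x, ENNReal.ofReal (k t)).toReal :=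
    funext fun x => by simp only [S, hK, one_sub_toReal_setLIntegral_Iic hk_int]
  have hS_pos : ∀ x, 0 < S x := hS ▸ toReal_setLIntegral_Ioi_pos hk_meas hk_pos hk_int
  have hS_anti : Antitone S := hS ▸ antitone_toReal_setLIntegral_Ioi hk_int
  have hFS : ∀ x, 1 - F x = ∑ i, w i * S ((x - μ i) / σ i) := fun x => by
    rw [hF, one_sub_sum_mul_eq_sum_mul_one_sub _ hwsum]
  let i₀ : Fin N := ⟨0, hN⟩
  obtain ⟨a, hμa⟩ := Finite.exists_le μ
  obtain ⟨b, hσb⟩ := Finite.exists_le σ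
  have hb : 0 < b := (hσ i₀).trans_le (hσb i₀)
  have hT : Tendsto (logTailRatio fun x => w i₀ * S ((x - μ i₀) / σ i₀)) atTop (𝓝 αK) :=
    tendsto_logTailRatio_const_mul (tendsto_logTailRatio_comp_affine hαK _ (hσ i₀)) (hw i₀)
      (.of_forall fun _ => (hS_pos _).ne')
  have hU : Tendsto (logTailRatio fun x => S ((x - a) / b)) atTop (𝓝 αK) :=
    tendsto_logTailRatio_comp_affine hαK a hb
  refine tendsto_logTailRatio_of_le_of_le hT hU (.of_forall fun _ => mul_pos (hw i₀) (hS_pos _))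
    (.of_forall fun x => ?_) ?_
  · rw [hFS]
    exact Finset.single_le_sum (f := fun i => w i * S ((x - μ i) / σ i))
      (fun i _ => (mul_pos (hw i) (hS_pos _)).le) (Finset.mem_univ i₀)
  · filter_upwards [eventually_ge_atTop a] with x hxa
    rw [hFS]
    exact sum_mul_comp_affine_le hS_anti (fun i => (hw i).le) hwsum hσ hμa hσb hxa
end

section
/- Suppose a survival function has the Pareto-mixture form F̄(x) = w·x^{-α₁} + (1-w)·∫_{[α₁+τ, ∞)} x^{-α} dH(α) for x ≥ 1, where w ∈ (0,1], α₁ > 0, τ > 0, and H is a probability measure supported on [α₁+τ, +∞). Then the right tail index of F equals α₁: lim_{x→+∞} (-log F̄(x))/log x = α₁. -/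
/-!
Since `α ≥ α₁` on the support of `H`, the survival function lies between `w * x ^ (-α₁)` and
`x ^ (-α₁)`; after taking logarithms and dividing by `log x`, the factor `w` contributes only
`log w / log x → 0`.
-/

open MeasureTheory Filter Set Topology

theorem tendsto_neg_log_div_log_of_le_rpow {F : ℝ → ℝ} {a c : ℝ} (hc : 0 < c)
    (hlow : ∀ᶠ x in atTop, c * x ^ (-a) ≤ F x) (hup : ∀ᶠ x in atTop, F x ≤ x ^ (-a)) :
    Tendsto (fun x => -Real.log (F x) / Real.log x) atTop (𝓝 a) := by
  have hlim : Tendsto (fun x => a + -Real.log c / Real.log x) atTop (𝓝 a) := by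
    simpa [div_eq_mul_inv] using tendsto_const_nhds.add
      (Real.tendsto_log_atTop.inv_tendsto_atTop.const_mul (-Real.log c))
  refine tendsto_of_tendsto_of_tendsto_of_le_of_le' tendsto_const_nhds hlim ?_ ?_ <;>
    filter_upwards [hlow, hup, eventually_gt_atTop 1] with x hlow hup hx
  all_goals
    have hlx : 0 < Real.log x := Real.log_pos hx
    have hxa : 0 < x ^ (-a) := Real.rpow_pos_of_pos (by linarith) _
    have hF : 0 < F x := lt_of_lt_of_le (mul_pos hc hxa) hlow
    have hlog_xa : Real.log (x ^ (-a)) = -a * Real.log x := Real.log_rpow (by linarith) _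
  · have : Real.log (F x) ≤ -a * Real.log x := hlog_xa ▸ Real.log_le_log hF hup
    rw [le_div_iff₀ hlx]
    linarith
  · have : Real.log c + -a * Real.log x ≤ Real.log (F x) := by
      rw [← hlog_xa, ← Real.log_mul hc.ne' hxa.ne']
      exact Real.log_le_log (mul_pos hc hxa) hlow
    rw [div_le_iff₀ hlx, add_mul, div_mul_cancel₀ _ hlx.ne']
    linarith

section RpowMixture

variable {H : Measure ℝ} {x a : ℝ}

theorem integrable_rpow_neg_of_ae_le [IsFiniteMeasure H] (hx : 1 ≤ x)
    (hH : ∀ᵐ α ∂H, a ≤ α) : Integrable (fun α => x ^ (-α)) H := by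
  have hx0 : 0 < x := by linarith
  refine Integrable.mono' (integrable_const (x ^ (-a)))
    (Real.continuous_const_rpow hx0.ne' |>.comp continuous_neg).aestronglyMeasurable ?_
  filter_upwards [hH] with α hα
  rw [Real.norm_of_nonneg (Real.rpow_nonneg hx0.le _)]
  exact Real.rpow_le_rpow_of_exponent_le hx (neg_le_neg hα)

theorem integral_rpow_neg_le_of_ae_le [IsProbabilityMeasure H] (hx : 1 ≤ x)
    (hH : ∀ᵐ α ∂H, a ≤ α) : ∫ α, x ^ (-α) ∂H ≤ x ^ (-a) := by
  simpa using integral_mono_ae (integrable_rpow_neg_of_ae_le hx hH) (integrable_const (x ^ (-a)))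
    (hH.mono fun α hα => Real.rpow_le_rpow_of_exponent_le hx (neg_le_neg hα))

end RpowMixture

theorem stmt_16_general (w α₁ τ : ℝ) (hw : 0 < w) (hw1 : w ≤ 1) (hτ : 0 < τ)
    (H : Measure ℝ) [IsProbabilityMeasure H] (hsupp : H (Set.Iio (α₁ + τ)) = 0) :
    Tendsto (fun x : ℝ =>
        -Real.log (w * x ^ (-α₁) + (1 - w) * ∫ α, x ^ (-α) ∂H) / Real.log x)
      atTop (nhds α₁) := by
  have hH : ∀ᵐ α ∂H, α₁ ≤ α := by
    refine measure_mono_null (fun α (hα : ¬α₁ ≤ α) => ?_) hsupp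
    exact mem_Iio.2 (by linarith [not_le.1 hα])
  have h1w : 0 ≤ 1 - w := sub_nonneg.2 hw1
  refine tendsto_neg_log_div_log_of_le_rpow hw ?_ ?_ <;>
    filter_upwards [eventually_ge_atTop 1] with x hx
  · exact le_add_of_nonneg_right <| mul_nonneg h1w <|
      integral_nonneg fun α => Real.rpow_nonneg (by linarith) _
  · calc w * x ^ (-α₁) + (1 - w) * ∫ α, x ^ (-α) ∂H
        ≤ w * x ^ (-α₁) + (1 - w) * x ^ (-α₁) := by
          gcongr
          exact integral_rpow_neg_le_of_ae_le hx hH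
      _ = x ^ (-α₁) := by ring

theorem stmt_16 (w α₁ τ : ℝ) (hw : 0 < w) (hw1 : w ≤ 1) (hα : 0 < α₁) (hτ : 0 < τ)
    (H : Measure ℝ) [IsProbabilityMeasure H] (hsupp : H (Set.Iio (α₁ + τ)) = 0) :
    Tendsto (fun x : ℝ =>
        -Real.log (w * x ^ (-α₁) + (1 - w) * ∫ α, x ^ (-α) ∂H) / Real.log x)
      atTop (nhds α₁) :=
  stmt_16_general w α₁ τ hw hw1 hτ H hsupp
end
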